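/- Let x be half an odd integer with x ≥ e^100 and let c = 1 + 1/log(x). Then Λ(⌊x⌋)·(x/⌊x⌋)^c·|log(x/⌊x⌋)|^{−1} + Λ(⌊x⌋+1)·(x/(⌊x⌋+1))^c·|log(x/(⌊x⌋+1))|^{−1} < (4 + 10^{−20})·x·log(x). -/

import Mathlib

/-!
For `n = ⌊x⌋` and `n = ⌊x⌋ + 1` we have `|x - n| = 1/2`, so `|log (x/n)| ≥ |x - n| / max x n`
is at least `1/(2x+1)`, while `Λ n ≤ log n ≤ log (x + 1/2)` and `(x/n)^c ≤ (x/(x - 1/2))^c`.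
Each term is therefore `2 x log x` up to a relative error `O(1/x)`, and `x ≥ e^100 > 10^21`
makes the total error smaller than `10^(-20) x log x`.
-/

open Real ArithmeticFunction

lemma abs_sub_div_max_le_abs_log_div {a b : ℝ} (ha : 0 < a) (hb : 0 < b) :
    |a - b| / max a b ≤ |log (a / b)| := by
  wlog hba : b ≤ a generalizing a b
  · have := this hb ha (le_of_not_ge hba)
    rwa [abs_sub_comm, max_comm, ← inv_div a b, log_inv, abs_neg] at this
  calc |a - b| / max a b = 1 - (a / b)⁻¹ := by
        rw [abs_of_nonneg (sub_nonneg.2 hba), max_eq_left hba]; field_simp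
    _ ≤ log (a / b) := one_sub_inv_le_log_of_pos (div_pos ha hb)
    _ ≤ |log (a / b)| := le_abs_self _

lemma log_add_le_log_add_div {x h : ℝ} (hx : 0 < x) (hh : 0 ≤ h) :
    log (x + h) ≤ log x + h / x := by
  have := log_le_sub_one_of_pos (show 0 < (x + h) / x by positivity)
  rw [log_div (by positivity) hx.ne'] at this
  field_simp at this ⊢
  linarith

lemma vonMangoldt_mul_rpow_mul_inv_abs_log_le {x c : ℝ} {n : ℕ} (hx : 1 / 2 < x)
    (hn : |x - n| = 1 / 2) (hc : 0 ≤ c) :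
    Λ n * (x / n) ^ c * |log (x / n)|⁻¹ ≤
      log (x + 1 / 2) * (x / (x - 1 / 2)) ^ c * (2 * x + 1) := by
  obtain ⟨hn_lower, hn_upper⟩ := abs_le.1 hn.le
  have hn0 : (0 : ℝ) < n := by linarith
  have hΛ : Λ n ≤ log (x + 1 / 2) := vonMangoldt_le_log.trans (log_le_log hn0 (by linarith))
  have hpow : (x / n) ^ c ≤ (x / (x - 1 / 2)) ^ c :=
    rpow_le_rpow (by positivity)
      (div_le_div_of_nonneg_left (by linarith) (by linarith) (by linarith)) hc
  have hlog : |log (x / n)|⁻¹ ≤ 2 * x + 1 := by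
    refine inv_le_of_inv_le₀ (by linarith) ?_
    calc (2 * x + 1)⁻¹ = (1 / 2) / (x + 1 / 2) := by field_simp
      _ ≤ |x - n| / max x n := by
        rw [hn]; gcongr; exact max_le (by linarith) (by linarith)
      _ ≤ |log (x / n)| := abs_sub_div_max_le_abs_log_div (by linarith) hn0
  have hlog_nonneg : 0 ≤ log (x + 1 / 2) := log_nonneg (by linarith)
  exact mul_le_mul (mul_le_mul hΛ hpow (by positivity) hlog_nonneg) hlog
    (by positivity) (by positivity)

lemma ten_pow_le_exp_hundred : (10 : ℝ) ^ 21 ≤ exp 100 :=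
  calc (10 : ℝ) ^ 21 ≤ 2 ^ 100 := by norm_num
    _ ≤ exp 1 ^ 100 := by gcongr; linarith [exp_one_gt_d9]
    _ = exp 100 := by rw [← exp_nat_mul]; norm_num

lemma two_mul_log_mul_rpow_mul_lt {x c : ℝ} (hx : 10 ^ 21 ≤ x) (hL : 1 ≤ log x) (hc : c ≤ 2) :
    2 * (log (x + 1 / 2) * (x / (x - 1 / 2)) ^ c * (2 * x + 1)) <
      (4 + 10 ^ (-(20 : ℝ))) * x * log x := by
  have hx0 : 0 < x := by linarith
  have hε : 10 ≤ (10 : ℝ) ^ (-(20 : ℝ)) * x := by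
    rw [rpow_neg (by norm_num), inv_mul_eq_div, le_div_iff₀ (by positivity)]
    norm_num; linarith
  have hpow : (x / (x - 1 / 2)) ^ c ≤ (x / (x - 1 / 2)) ^ 2 := by
    have hbase : 1 ≤ x / (x - 1 / 2) := (one_le_div (by linarith)).2 (by linarith)
    rw [← rpow_two]
    exact rpow_le_rpow_of_exponent_le hbase hc
  calc 2 * (log (x + 1 / 2) * (x / (x - 1 / 2)) ^ c * (2 * x + 1))
      ≤ 2 * ((log x + 1 / 2 / x) * (x / (x - 1 / 2)) ^ 2 * (2 * x + 1)) := by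
        gcongr 2 * (?_ * ?_ * _)
        · exact rpow_nonneg (div_nonneg hx0.le (by linarith)) c
        · exact log_add_le_log_add_div hx0 one_half_pos.le
    _ = (2 * log x * x + 1) * x * (2 * x + 1) / (x - 1 / 2) ^ 2 := by
        field_simp
    _ < (4 + 10 ^ (-(20 : ℝ))) * x * log x := by
        rw [div_lt_iff₀ (by nlinarith)]
        -- the left side exceeds `4 x log x (x - 1/2)^2` by about `6 x² log x`; `10^(-20) x ≥ 10` pays
        have hεL : 10 * (log x * (x - 1)) ≤ 10 ^ (-(20 : ℝ)) * log x * (x - 1 / 2) ^ 2 :=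
          calc 10 * (log x * (x - 1)) ≤ (10 ^ (-(20 : ℝ)) * x) * (log x * (x - 1)) := by
                gcongr; nlinarith
            _ ≤ 10 ^ (-(20 : ℝ)) * log x * (x - 1 / 2) ^ 2 := by
                have := mul_le_mul_of_nonneg_left (by nlinarith : x * (x - 1) ≤ (x - 1 / 2) ^ 2)
                  (by positivity : (0 : ℝ) ≤ 10 ^ (-(20 : ℝ)) * log x)
                linarith
        nlinarith [mul_le_mul_of_nonneg_left hεL hx0.le,
          mul_nonneg (mul_nonneg hx0.le (sub_nonneg.2 hL)) (by linarith : (0 : ℝ) ≤ 4 * x - 9)]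

/-- The bound on the partial sum `S₃` (the terms `n = ⌊x⌋` and `n = ⌊x⌋ + 1`)
in the proof of the paper's main lemma. -/
theorem S3_bound (x : ℝ) (hx : ∃ m : ℕ, x = m + 1 / 2) (hx2 : x ≥ Real.exp 100) :
    let c : ℝ := 1 + 1 / Real.log x
    ArithmeticFunction.vonMangoldt ⌊x⌋₊ * (x / ⌊x⌋₊) ^ c * |Real.log (x / ⌊x⌋₊)|⁻¹ +
      ArithmeticFunction.vonMangoldt (⌊x⌋₊ + 1) * (x / (⌊x⌋₊ + 1)) ^ c *
        |Real.log (x / (⌊x⌋₊ + 1))|⁻¹ <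
      (4 + 10 ^ (-(20 : ℝ))) * x * Real.log x := by
  intro c
  obtain ⟨m, hm⟩ := hx
  have hx21 : (10 : ℝ) ^ 21 ≤ x := ten_pow_le_exp_hundred.trans hx2
  have hL : 100 ≤ log x := (le_log_iff_exp_le (by linarith)).2 hx2
  have hc0 : 0 ≤ c := by positivity
  have hc2 : c ≤ 2 := by
    have : 1 / log x ≤ 1 := by rw [div_le_one (by linarith)]; linarith
    linarith
  have hfloor : ⌊x⌋₊ = m := (Nat.floor_eq_iff (by linarith)).2 ⟨by linarith, by linarith⟩
  have h₁ := vonMangoldt_mul_rpow_mul_inv_abs_log_le (x := x) (n := ⌊x⌋₊) (by linarith)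
    (by rw [hfloor, hm]; norm_num) hc0
  have h₂ := vonMangoldt_mul_rpow_mul_inv_abs_log_le (x := x) (n := ⌊x⌋₊ + 1) (by linarith)
    (by rw [hfloor, hm]; norm_num) hc0
  push_cast at h₂
  linarith [two_mul_log_mul_rpow_mul_lt hx21 (by linarith) hc2]
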